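/- Let m > 0 and λ, λ' > 0. There exists a constant C > 0 such that for every measurable f : ℝ³ → ℂ with ∫_{ℝ³} (1+|p|²)^{1/2} |f(p)|² dp < ∞, the function Df(p) := 2π² (√(ν|p|²+λ) − √(ν|p|²+λ')) f(p) + (λ'−λ) ∫_{ℝ³} f(q) / ((G(p,q)+λ)(G(p,q)+λ')) dq satisfies ∫_{ℝ³} (1+|p|²)^{1/2} |Df(p)|² dp ≤ C ∫_{ℝ³} (1+|p|²)^{1/2} |f(p)|² dp. (This expresses that the difference T_λ − T_{λ'} of the charge operators is bounded on the Sobolev space H^{1/2}(ℝ³), read on the Fourier side.) -/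

import Mathlib

open MeasureTheory
open scoped RealInnerProductSpace

noncomputable section

abbrev E3 := EuclideanSpace ℝ (Fin 3)

def mu (m : ℝ) : ℝ := 2 / (m + 1)

def nu (m : ℝ) : ℝ := m * (m + 2) / (m + 1) ^ 2

def Gker (m : ℝ) (p q : E3) : ℝ := ‖p‖ ^ 2 + ‖q‖ ^ 2 + mu m * ⟪p, q⟫

/-!
The multiplier is bounded: `|√(t + λ) - √(t + λ')| ≤ √|λ - λ'|`. For the integral term write
`⟨p⟩ = 1 + |p|²`. Since `μ = 2 / (m + 1) < 2`, `|μ p·q| ≤ (|p|² + |q|²) / (m + 1)`, so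
`G(p,q) + λ ≥ c (1 + |p|² + |q|²) ≥ c ⟨p⟩^(5/8) ⟨q⟩^(3/8)`, and the kernel `1 / ((G + λ)(G + λ'))`
is dominated by the product `M ⟨p⟩^(-5/4) ⟨q⟩^(-3/4)`. Hence the integral term is dominated by a
rank-one operator: by Cauchy–Schwarz `∫ ⟨q⟩^(-3/4) |f| ≤ ‖⟨·⟩^(-1)‖₂ ‖⟨·⟩^(1/4) f‖₂`, and
`⟨p⟩^(1/2) (⟨p⟩^(-5/4))² = ⟨p⟩^(-2)`. The split `2 = 5/4 + 3/4` puts both weights at `⟨·⟩^(-2)`,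
integrable on `ℝ³` because `2 > 3/2`.
-/

theorem abs_sqrt_sub_sqrt_le_sqrt_abs_sub {x y : ℝ} (hx : 0 ≤ x) (hy : 0 ≤ y) :
    |√x - √y| ≤ √|x - y| := by
  rw [← Real.sqrt_sq_eq_abs]
  apply Real.sqrt_le_sqrt
  have hsx := Real.sq_sqrt hx
  have hsy := Real.sq_sqrt hy
  have := Real.sqrt_nonneg x
  have := Real.sqrt_nonneg y
  rcases le_total y x with h | h
  · rw [abs_of_nonneg (by linarith)]
    nlinarith [mul_le_mul_of_nonneg_right (Real.sqrt_le_sqrt h) (Real.sqrt_nonneg y)]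
  · rw [abs_of_nonpos (by linarith)]
    nlinarith [mul_le_mul_of_nonneg_right (Real.sqrt_le_sqrt h) (Real.sqrt_nonneg x)]

theorem one_add_rpow_mul_one_add_rpow_le {x y a b : ℝ} (hx : 0 ≤ x) (hy : 0 ≤ y)
    (ha : 0 ≤ a) (hb : 0 ≤ b) : (1 + x) ^ a * (1 + y) ^ b ≤ (1 + x + y) ^ (a + b) := by
  rw [Real.rpow_add (by positivity)]
  exact mul_le_mul (Real.rpow_le_rpow (by positivity) (by linarith) ha)
    (Real.rpow_le_rpow (by positivity) (by linarith) hb) (by positivity) (by positivity)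

theorem integrable_one_add_norm_sq_rpow_neg {E : Type*} [NormedAddCommGroup E]
    [NormedSpace ℝ E] [FiniteDimensional ℝ E] [MeasurableSpace E] [BorelSpace E]
    {μ : Measure E} [μ.IsAddHaarMeasure] {s : ℝ} (hs : (Module.finrank ℝ E : ℝ) < 2 * s) :
    Integrable (fun x : E => (1 + ‖x‖ ^ 2) ^ (-s)) μ := by
  simpa [neg_div] using integrable_rpow_neg_one_add_norm_sq (μ := μ) hs

theorem sq_integral_mul_le_of_nonneg {α : Type*} [MeasurableSpace α] {μ : Measure α}
    {u v : α → ℝ} (hu0 : 0 ≤ᵐ[μ] u) (hv0 : 0 ≤ᵐ[μ] v) (hu : MemLp u 2 μ) (hv : MemLp v 2 μ) :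
    (∫ x, u x * v x ∂μ) ^ 2 ≤ (∫ x, u x ^ 2 ∂μ) * ∫ x, v x ^ 2 ∂μ := by
  have h := integral_mul_le_Lp_mul_Lq_of_nonneg Real.HolderConjugate.two_two hu0 hv0
    (by simpa using hu) (by simpa using hv)
  simp only [Real.rpow_two] at h
  have hA : 0 ≤ ∫ x, u x ^ 2 ∂μ := integral_nonneg fun x => sq_nonneg _
  have hB : 0 ≤ ∫ x, v x ^ 2 ∂μ := integral_nonneg fun x => sq_nonneg _
  have huv : 0 ≤ ∫ x, u x * v x ∂μ := integral_nonneg_of_ae <| by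
    filter_upwards [hu0, hv0] with x hux hvx using mul_nonneg hux hvx
  calc (∫ x, u x * v x ∂μ) ^ 2
      ≤ ((∫ x, u x ^ 2 ∂μ) ^ (1 / 2 : ℝ) * (∫ x, v x ^ 2 ∂μ) ^ (1 / 2 : ℝ)) ^ 2 :=
        pow_le_pow_left₀ huv h 2
    _ = (∫ x, u x ^ 2 ∂μ) * ∫ x, v x ^ 2 ∂μ := by
        rw [mul_pow, ← Real.sqrt_eq_rpow, ← Real.sqrt_eq_rpow, Real.sq_sqrt hA, Real.sq_sqrt hB]

theorem norm_integral_div_le {α E : Type*} [MeasurableSpace E] {μ : Measure E}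
    {k : α → E → ℝ} {a : α → ℝ} {b : E → ℝ} (hk : ∀ p q, |k p q|⁻¹ ≤ a p * b q)
    {f : E → ℂ} (hbf : Integrable (fun q => b q * ‖f q‖) μ) (p : α) :
    ‖∫ q, f q / (k p q : ℂ) ∂μ‖ ≤ a p * ∫ q, b q * ‖f q‖ ∂μ := by
  calc ‖∫ q, f q / (k p q : ℂ) ∂μ‖ ≤ ∫ q, ‖f q / (k p q : ℂ)‖ ∂μ :=
        norm_integral_le_integral_norm _
    _ ≤ ∫ q, a p * (b q * ‖f q‖) ∂μ := by
        refine integral_mono_of_nonneg (.of_forall fun q => norm_nonneg _)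
          (hbf.const_mul _) (.of_forall fun q => ?_)
        dsimp only
        rw [norm_div, Complex.norm_real, Real.norm_eq_abs, div_eq_mul_inv, mul_comm, ← mul_assoc]
        exact mul_le_mul_of_nonneg_right (hk p q) (norm_nonneg _)
    _ = a p * ∫ q, b q * ‖f q‖ ∂μ := integral_const_mul _ _

theorem integrable_rpow_mul_norm_and_sq_integral_le {α F : Type*} [MeasurableSpace α]
    [NormedAddCommGroup F] {μ : Measure α} {w : α → ℝ} {f : α → F} (hw : ∀ x, 0 < w x)
    (hwm : Measurable w) (hf : AEStronglyMeasurable f μ)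
    (hw2 : Integrable (fun x => w x ^ (-2 : ℝ)) μ)
    (hfw : Integrable (fun x => w x ^ ((1 : ℝ) / 2) * ‖f x‖ ^ 2) μ) :
    Integrable (fun x => w x ^ (-(3 / 4) : ℝ) * ‖f x‖) μ ∧
      (∫ x, w x ^ (-(3 / 4) : ℝ) * ‖f x‖ ∂μ) ^ 2 ≤
        (∫ x, w x ^ (-2 : ℝ) ∂μ) * ∫ x, w x ^ ((1 : ℝ) / 2) * ‖f x‖ ^ 2 ∂μ := by
  set u : α → ℝ := fun x => w x ^ (-1 : ℝ)
  set v : α → ℝ := fun x => w x ^ ((1 : ℝ) / 4) * ‖f x‖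
  have huv : (fun x => w x ^ (-(3 / 4) : ℝ) * ‖f x‖) = fun x => u x * v x := by
    ext x
    rw [← mul_assoc, ← Real.rpow_add (hw x)]
    norm_num
  have hu2 : (fun x => u x ^ 2) = fun x => w x ^ (-2 : ℝ) := by
    ext x
    rw [← Real.rpow_natCast, ← Real.rpow_mul (hw x).le]
    norm_num
  have hv2 : (fun x => v x ^ 2) = fun x => w x ^ ((1 : ℝ) / 2) * ‖f x‖ ^ 2 := by
    ext x
    rw [mul_pow, ← Real.rpow_natCast, ← Real.rpow_mul (hw x).le]
    norm_num
  have hu : MemLp u 2 μ :=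
    (memLp_two_iff_integrable_sq (hwm.pow_const _).aestronglyMeasurable).2 (hu2 ▸ hw2)
  have hv : MemLp v 2 μ :=
    (memLp_two_iff_integrable_sq
      ((hwm.pow_const _).aestronglyMeasurable.mul hf.norm)).2 (hv2 ▸ hfw)
  refine ⟨huv ▸ hu.integrable_mul hv, ?_⟩
  rw [huv, ← hu2, ← hv2]
  exact sq_integral_mul_le_of_nonneg (.of_forall fun x => (Real.rpow_pos_of_pos (hw x) _).le)
    (.of_forall fun x => mul_nonneg (Real.rpow_nonneg (hw x).le _) (norm_nonneg _)) hu hv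

theorem div_mul_le_Gker {m : ℝ} (hm : 0 < m + 1) (p q : E3) :
    m / (m + 1) * (‖p‖ ^ 2 + ‖q‖ ^ 2) ≤ Gker m p q := by
  have hinner : -(‖p‖ * ‖q‖) ≤ ⟪p, q⟫ := (abs_le.mp (abs_real_inner_le_norm p q)).1
  have hmu : 0 ≤ mu m := by unfold mu; positivity
  have hAMGM : 2 * ‖p‖ * ‖q‖ ≤ ‖p‖ ^ 2 + ‖q‖ ^ 2 := two_mul_le_add_sq _ _
  have hsplit : m / (m + 1) * (‖p‖ ^ 2 + ‖q‖ ^ 2)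
      = ‖p‖ ^ 2 + ‖q‖ ^ 2 - mu m / 2 * (‖p‖ ^ 2 + ‖q‖ ^ 2) := by
    unfold mu; field_simp; ring
  rw [hsplit, Gker]
  nlinarith [mul_le_mul_of_nonneg_left hinner hmu, mul_le_mul_of_nonneg_left hAMGM hmu]

theorem min_mul_le_Gker_add {m lam : ℝ} (hm : 0 < m + 1) (p q : E3) :
    min (m / (m + 1)) lam * (1 + ‖p‖ ^ 2 + ‖q‖ ^ 2) ≤ Gker m p q + lam := by
  have h₁ : min (m / (m + 1)) lam * (‖p‖ ^ 2 + ‖q‖ ^ 2) ≤ m / (m + 1) * (‖p‖ ^ 2 + ‖q‖ ^ 2) :=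
    mul_le_mul_of_nonneg_right (min_le_left _ _) (by positivity)
  linarith [div_mul_le_Gker hm p q, min_le_right (m / (m + 1)) lam]

theorem exists_abs_inv_Gker_add_mul_Gker_add_le {m lam lam' : ℝ} (hm : 0 < m) (hlam : 0 < lam)
    (hlam' : 0 < lam') : ∃ M, ∀ p q : E3, |(Gker m p q + lam) * (Gker m p q + lam')|⁻¹ ≤
      M * (1 + ‖p‖ ^ 2) ^ (-(5 / 4) : ℝ) * (1 + ‖q‖ ^ 2) ^ (-(3 / 4) : ℝ) := by
  set c₁ := min (m / (m + 1)) lam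
  set c₂ := min (m / (m + 1)) lam'
  have hc₁ : 0 < c₁ := lt_min (by positivity) hlam
  have hc₂ : 0 < c₂ := lt_min (by positivity) hlam'
  refine ⟨(c₁ * c₂)⁻¹, fun p q => ?_⟩
  have hm1 : 0 < m + 1 := by linarith
  have h₁ := min_mul_le_Gker_add (lam := lam) hm1 p q
  have h₂ := min_mul_le_Gker_add (lam := lam') hm1 p q
  have hsplit := one_add_rpow_mul_one_add_rpow_le (sq_nonneg ‖p‖) (sq_nonneg ‖q‖)
    (a := 5 / 4) (b := 3 / 4) (by norm_num) (by norm_num)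
  norm_num only [Real.rpow_two] at hsplit
  have hlow : c₁ * c₂ * ((1 + ‖p‖ ^ 2) ^ (5 / 4 : ℝ) * (1 + ‖q‖ ^ 2) ^ (3 / 4 : ℝ)) ≤
      (Gker m p q + lam) * (Gker m p q + lam') :=
    calc _ ≤ c₁ * c₂ * (1 + ‖p‖ ^ 2 + ‖q‖ ^ 2) ^ 2 := by gcongr
      _ = (c₁ * (1 + ‖p‖ ^ 2 + ‖q‖ ^ 2)) * (c₂ * (1 + ‖p‖ ^ 2 + ‖q‖ ^ 2)) := by ring
      _ ≤ _ := mul_le_mul h₁ h₂ (by positivity) (by linarith [mul_pos hc₁ (by positivity :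
            (0 : ℝ) < 1 + ‖p‖ ^ 2 + ‖q‖ ^ 2)])
  rw [abs_of_pos (lt_of_lt_of_le (by positivity) hlow), Real.rpow_neg (by positivity),
    Real.rpow_neg (by positivity), mul_assoc, ← mul_inv, ← mul_inv]
  exact inv_anti₀ (by positivity) hlow

def chargeOperatorDiff (m lam lam' : ℝ) (f : E3 → ℂ) (p : E3) : ℂ :=
  ((2 * Real.pi ^ 2 *
      (Real.sqrt (nu m * ‖p‖ ^ 2 + lam) - Real.sqrt (nu m * ‖p‖ ^ 2 + lam')) : ℝ) : ℂ) * f p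
    + ((lam' - lam : ℝ) : ℂ) *
      ∫ q : E3, f q / (((Gker m p q + lam) * (Gker m p q + lam') : ℝ) : ℂ)

theorem norm_chargeOperatorDiff_le {m lam lam' M : ℝ} (hm : 0 ≤ m) (hlam : 0 ≤ lam)
    (hlam' : 0 ≤ lam') (hK : ∀ p q : E3, |(Gker m p q + lam) * (Gker m p q + lam')|⁻¹ ≤
      M * (1 + ‖p‖ ^ 2) ^ (-(5 / 4) : ℝ) * (1 + ‖q‖ ^ 2) ^ (-(3 / 4) : ℝ))
    {f : E3 → ℂ} (hf : Integrable (fun q : E3 => (1 + ‖q‖ ^ 2) ^ (-(3 / 4) : ℝ) * ‖f q‖))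
    (p : E3) :
    ‖chargeOperatorDiff m lam lam' f p‖ ≤ 2 * Real.pi ^ 2 * √|lam - lam'| * ‖f p‖ +
      |lam' - lam| * (M * (1 + ‖p‖ ^ 2) ^ (-(5 / 4) : ℝ) *
        ∫ q : E3, (1 + ‖q‖ ^ 2) ^ (-(3 / 4) : ℝ) * ‖f q‖) := by
  have hnu : 0 ≤ nu m * ‖p‖ ^ 2 := by unfold nu; positivity
  have hsqrt := abs_sqrt_sub_sqrt_le_sqrt_abs_sub (add_nonneg hnu hlam) (add_nonneg hnu hlam')
  rw [add_sub_add_left_eq_sub] at hsqrt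
  refine (norm_add_le _ _).trans (add_le_add ?_ ?_) <;>
    rw [norm_mul, Complex.norm_real, Real.norm_eq_abs]
  · rw [abs_mul, abs_of_pos (by positivity : (0 : ℝ) < 2 * Real.pi ^ 2)]
    gcongr
  · exact mul_le_mul_of_nonneg_left (norm_integral_div_le hK hf p) (abs_nonneg _)

theorem one_add_norm_sq_rpow_mul_sq_norm_chargeOperatorDiff_le {m lam lam' M : ℝ}
    (hm : 0 ≤ m) (hlam : 0 ≤ lam) (hlam' : 0 ≤ lam')
    (hK : ∀ p q : E3, |(Gker m p q + lam) * (Gker m p q + lam')|⁻¹ ≤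
      M * (1 + ‖p‖ ^ 2) ^ (-(5 / 4) : ℝ) * (1 + ‖q‖ ^ 2) ^ (-(3 / 4) : ℝ))
    {f : E3 → ℂ} (hf : Integrable (fun q : E3 => (1 + ‖q‖ ^ 2) ^ (-(3 / 4) : ℝ) * ‖f q‖))
    (p : E3) :
    (1 + ‖p‖ ^ 2) ^ ((1 : ℝ) / 2) * ‖chargeOperatorDiff m lam lam' f p‖ ^ 2 ≤
      2 * (2 * Real.pi ^ 2 * √|lam - lam'|) ^ 2 * ((1 + ‖p‖ ^ 2) ^ ((1 : ℝ) / 2) * ‖f p‖ ^ 2) +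
      2 * (|lam' - lam| * M * ∫ q : E3, (1 + ‖q‖ ^ 2) ^ (-(3 / 4) : ℝ) * ‖f q‖) ^ 2 *
        (1 + ‖p‖ ^ 2) ^ (-2 : ℝ) := by
  set S := ∫ q : E3, (1 + ‖q‖ ^ 2) ^ (-(3 / 4) : ℝ) * ‖f q‖
  set w := 1 + ‖p‖ ^ 2
  have hw : 0 < w := by positivity
  have hS : 0 ≤ S := integral_nonneg fun q => by positivity
  have hweight : w ^ ((1 : ℝ) / 2) * (w ^ (-(5 / 4) : ℝ)) ^ 2 = w ^ (-2 : ℝ) := by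
    rw [← Real.rpow_natCast, ← Real.rpow_mul hw.le, ← Real.rpow_add hw]
    norm_num
  have hD := norm_chargeOperatorDiff_le hm hlam hlam' hK hf p
  have hsq : ‖chargeOperatorDiff m lam lam' f p‖ ^ 2 ≤
      2 * (2 * Real.pi ^ 2 * √|lam - lam'| * ‖f p‖) ^ 2 +
        2 * (|lam' - lam| * (M * w ^ (-(5 / 4) : ℝ) * S)) ^ 2 := by
    nlinarith [sq_nonneg (2 * Real.pi ^ 2 * √|lam - lam'| * ‖f p‖ -
      |lam' - lam| * (M * w ^ (-(5 / 4) : ℝ) * S)), norm_nonneg (chargeOperatorDiff m lam lam' f p)]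
  calc w ^ ((1 : ℝ) / 2) * ‖chargeOperatorDiff m lam lam' f p‖ ^ 2
      ≤ w ^ ((1 : ℝ) / 2) * (2 * (2 * Real.pi ^ 2 * √|lam - lam'| * ‖f p‖) ^ 2 +
        2 * (|lam' - lam| * (M * w ^ (-(5 / 4) : ℝ) * S)) ^ 2) := by gcongr
    _ = _ := by rw [← hweight]; ring

/-- The difference `T_λ − T_{λ'}` of the charge operators is bounded on `H^{1/2}(ℝ³)`,
read on the Fourier side. -/
theorem charge_operator_shift_difference_bounded
    (m lam lam' : ℝ) (hm : 0 < m) (hlam : 0 < lam) (hlam' : 0 < lam') :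
    ∃ C > 0, ∀ f : E3 → ℂ, Measurable f →
      Integrable (fun p => (1 + ‖p‖ ^ 2) ^ ((1 : ℝ) / 2) * ‖f p‖ ^ 2) →
      (∫ p : E3, (1 + ‖p‖ ^ 2) ^ ((1 : ℝ) / 2) *
          ‖((2 * Real.pi ^ 2 *
              (Real.sqrt (nu m * ‖p‖ ^ 2 + lam) - Real.sqrt (nu m * ‖p‖ ^ 2 + lam')) : ℝ) : ℂ)
              * f p
            + ((lam' - lam : ℝ) : ℂ) *
              ∫ q : E3, f q / (((Gker m p q + lam) * (Gker m p q + lam') : ℝ) : ℂ)‖ ^ 2)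
        ≤ C * ∫ p : E3, (1 + ‖p‖ ^ 2) ^ ((1 : ℝ) / 2) * ‖f p‖ ^ 2 := by
  obtain ⟨M, hK⟩ := exists_abs_inv_Gker_add_mul_Gker_add_le hm hlam hlam'
  have hJint : Integrable (fun q : E3 => (1 + ‖q‖ ^ 2) ^ (-2 : ℝ)) :=
    integrable_one_add_norm_sq_rpow_neg (by norm_num)
  set J := ∫ q : E3, (1 + ‖q‖ ^ 2) ^ (-2 : ℝ)
  set d := 2 * Real.pi ^ 2 * √|lam - lam'|
  refine ⟨2 * d ^ 2 + 2 * (|lam' - lam| * M * J) ^ 2 + 1, by positivity, fun f hf hfw => ?_⟩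
  obtain ⟨hS, hSJ⟩ := integrable_rpow_mul_norm_and_sq_integral_le (fun q => by positivity)
    (by fun_prop) hf.aestronglyMeasurable hJint hfw
  set S := ∫ q : E3, (1 + ‖q‖ ^ 2) ^ (-(3 / 4) : ℝ) * ‖f q‖
  set N := ∫ p : E3, (1 + ‖p‖ ^ 2) ^ ((1 : ℝ) / 2) * ‖f p‖ ^ 2
  have hJ : 0 ≤ J := integral_nonneg fun q => by positivity
  have hN : 0 ≤ N := integral_nonneg fun q => by positivity
  calc _ ≤ ∫ p : E3, 2 * d ^ 2 * ((1 + ‖p‖ ^ 2) ^ ((1 : ℝ) / 2) * ‖f p‖ ^ 2) +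
          2 * (|lam' - lam| * M * S) ^ 2 * (1 + ‖p‖ ^ 2) ^ (-2 : ℝ) :=
        integral_mono_of_nonneg (.of_forall fun p => by positivity)
          ((hfw.const_mul _).add (hJint.const_mul _)) (.of_forall fun p =>
            one_add_norm_sq_rpow_mul_sq_norm_chargeOperatorDiff_le hm.le hlam.le hlam'.le hK hS p)
    _ = 2 * d ^ 2 * N + 2 * (|lam' - lam| * M * S) ^ 2 * J := by
        rw [integral_add (hfw.const_mul _) (hJint.const_mul _), integral_const_mul,
          integral_const_mul]
    _ ≤ _ := by
        have hc : 0 ≤ 2 * (|lam' - lam| * M) ^ 2 * J := by positivity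
        nlinarith [mul_le_mul_of_nonneg_left hSJ hc]
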